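/- Let P ⊆ ℂ be a nonempty compact set, let n_1, …, n_N and m_1, …, m_N be positive integers with n̄ = n_1 + ⋯ + n_N and m̄ = m_1 + ⋯ + m_N, and let A_{ij} : P → ℂ^{n_i×n_j} and B_{ij} : P → ℂ^{n_i×m_j} for 1 ≤ i ≤ j ≤ N be continuous. Define the upper block-triangular continuous maps A : P → ℂ^{n̄×n̄} and B : P → ℂ^{n̄×m̄} whose (i,j)-blocks are A_{ij}(θ) and B_{ij}(θ) for i ≤ j and are zero for i > j. If every diagonal pair (A_{ii}, B_{ii}) is uniformly ensemble reachable on C(P, ℂ^{n_i}), then the pair (A, B) is uniformly ensemble reachable on C(P, ℂ^{n̄}). -/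

import Mathlib

/-!
For an upper block-triangular pair, the lower block row evolves on its own: the lower block of
`∑ j, p_j(A) b_j` is `∑ j, p_j(A₂₂) b_j⁽²⁾`, and the columns of the upper block column do not
reach it at all. So the polynomials of the lower block columns are chosen first, to approximate
the lower part of the target; what they leave in the upper part is a continuous function, which
the upper block columns approximate by reachability of `(A₁₁, B₁₁)`. Splitting off one diagonal
block at a time, the theorem follows by induction on the number of blocks.
-/

open Polynomial Matrix

/-- A pair `(A, B)` of matrix-valued families on a parameter set `P ⊆ ℂ` is uniformly
ensemble reachable on `C(P, ℂ^ι)`: every continuous target can be approximated in the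
supremum norm by `∑_j p_j(A(θ)) b_j(θ)` with polynomials `p_j` applied to the columns of
`B`. -/
def UniformEnsembleReachable {ι κ : Type*} [Fintype ι] [DecidableEq ι] [Fintype κ]
    (P : Set ℂ) (A : P → Matrix ι ι ℂ) (B : P → Matrix ι κ ℂ) : Prop :=
  ∀ f : P → ι → ℂ, Continuous f → ∀ ε : ℝ, 0 < ε →
    ∃ p : κ → Polynomial ℂ, ∀ θ : P,
      ‖(∑ j : κ, (Polynomial.aeval (A θ) (p j)).mulVec fun i => B θ i j) - f θ‖ < ε

namespace Matrix

variable {R : Type*} [CommRing R] {ι₁ ι₂ : Type*} [Fintype ι₁] [Fintype ι₂]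
  [DecidableEq ι₁] [DecidableEq ι₂]

theorem aeval_fromBlocks_zero₂₁ (A₁₁ : Matrix ι₁ ι₁ R) (A₁₂ : Matrix ι₁ ι₂ R)
    (A₂₂ : Matrix ι₂ ι₂ R) (p : R[X]) :
    ∃ X, aeval (fromBlocks A₁₁ A₁₂ 0 A₂₂) p = fromBlocks (aeval A₁₁ p) X 0 (aeval A₂₂ p) := by
  induction p using Polynomial.induction_on with
  | C a =>
    refine ⟨0, ?_⟩
    simp only [aeval_C, Algebra.algebraMap_eq_smul_one]
    rw [← fromBlocks_one, fromBlocks_smul, smul_zero, smul_zero]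
  | add p q hp hq =>
    obtain ⟨X, hX⟩ := hp
    obtain ⟨Y, hY⟩ := hq
    exact ⟨X + Y, by simp [hX, hY, fromBlocks_add]⟩
  | monomial k a ih =>
    obtain ⟨X, hX⟩ := ih
    refine ⟨aeval A₁₁ (C a * Polynomial.X ^ k) * A₁₂ + X * A₂₂, ?_⟩
    simp only [pow_succ, ← mul_assoc, map_mul (aeval _) _ Polynomial.X, aeval_X, hX,
      fromBlocks_multiply]
    simp

theorem aeval_eq_fromBlocks_of_toBlocks₂₁_eq_zero {M : Matrix (ι₁ ⊕ ι₂) (ι₁ ⊕ ι₂) R}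
    (hM : M.toBlocks₂₁ = 0) (p : R[X]) :
    ∃ X, aeval M p = fromBlocks (aeval M.toBlocks₁₁ p) X 0 (aeval M.toBlocks₂₂ p) := by
  have hM' : fromBlocks M.toBlocks₁₁ M.toBlocks₁₂ 0 M.toBlocks₂₂ = M :=
    hM ▸ fromBlocks_toBlocks M
  simpa only [hM'] using aeval_fromBlocks_zero₂₁ M.toBlocks₁₁ M.toBlocks₁₂ M.toBlocks₂₂ p

theorem aeval_mulVec_comp_inr {M : Matrix (ι₁ ⊕ ι₂) (ι₁ ⊕ ι₂) R} (hM : M.toBlocks₂₁ = 0)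
    (p : R[X]) (v : ι₁ ⊕ ι₂ → R) :
    (aeval M p *ᵥ v) ∘ Sum.inr = aeval M.toBlocks₂₂ p *ᵥ (v ∘ Sum.inr) := by
  obtain ⟨X, hX⟩ := aeval_eq_fromBlocks_of_toBlocks₂₁_eq_zero hM p
  simp [hX, fromBlocks_mulVec]

theorem aeval_mulVec_sumElim_zero {M : Matrix (ι₁ ⊕ ι₂) (ι₁ ⊕ ι₂) R} (hM : M.toBlocks₂₁ = 0)
    (p : R[X]) (u : ι₁ → R) :
    aeval M p *ᵥ Sum.elim u 0 = Sum.elim (aeval M.toBlocks₁₁ p *ᵥ u) 0 := by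
  obtain ⟨X, hX⟩ := aeval_eq_fromBlocks_of_toBlocks₂₁_eq_zero hM p
  simp [hX, fromBlocks_mulVec]

end Matrix

section Krylov

variable {R : Type*} [CommRing R] {ι κ : Type*} [Fintype ι] [DecidableEq ι] [Fintype κ]

noncomputable def krylovSum (A : Matrix ι ι R) (B : Matrix ι κ R) (p : κ → R[X]) : ι → R :=
  ∑ j, aeval A (p j) *ᵥ Bᵀ j

theorem uniformEnsembleReachable_iff {P : Set ℂ} {A : P → Matrix ι ι ℂ}
    {B : P → Matrix ι κ ℂ} :
    UniformEnsembleReachable P A B ↔ ∀ f : P → ι → ℂ, Continuous f → ∀ ε : ℝ, 0 < ε →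
      ∃ p : κ → ℂ[X], ∀ θ, ‖krylovSum (A θ) (B θ) p - f θ‖ < ε :=
  Iff.rfl

theorem Continuous.krylovSum [TopologicalSpace R] [IsTopologicalRing R] {X : Type*}
    [TopologicalSpace X] {A : X → Matrix ι ι R} {B : X → Matrix ι κ R} (hA : Continuous A)
    (hB : Continuous B) (p : κ → R[X]) : Continuous fun x => krylovSum (A x) (B x) p :=
  continuous_finsetSum _ fun j _ =>
    ((p j).continuous_aeval.comp hA).matrix_mulVec ((continuous_apply j).comp hB.matrix_transpose)

theorem krylovSum_reindex {ι' κ' : Type*} [Fintype ι'] [DecidableEq ι'] [Fintype κ']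
    (e : ι ≃ ι') (g : κ ≃ κ') (A : Matrix ι ι R) (B : Matrix ι κ R) (p : κ → R[X]) :
    krylovSum (reindex e e A) (reindex e g B) (p ∘ g.symm) = krylovSum A B p ∘ e.symm := by
  have haeval (q : R[X]) : aeval (reindex e e A) q = reindex e e (aeval A q) := by
    rw [← coe_reindexAlgEquiv R R, aeval_algEquiv]
    rfl
  ext i
  simp only [krylovSum, Finset.sum_apply, Function.comp_apply, haeval]
  rw [← Equiv.sum_comp g]
  refine Finset.sum_congr rfl fun j _ => ?_
  have hcol : (reindex e g B)ᵀ (g j) ∘ e = Bᵀ j := by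
    ext
    simp
  rw [Equiv.symm_apply_apply, reindex_apply, submatrix_mulVec_equiv, Equiv.symm_symm, hcol]
  rfl

variable {ι₁ ι₂ : Type*} [Fintype ι₁] [Fintype ι₂] [DecidableEq ι₁] [DecidableEq ι₂]

theorem krylovSum_sumElim {κ₁ κ₂ : Type*} [Fintype κ₁] [Fintype κ₂] (A : Matrix ι ι R)
    (B : Matrix ι (κ₁ ⊕ κ₂) R) (r : κ₁ → R[X]) (q : κ₂ → R[X]) :
    krylovSum A B (Sum.elim r q) = krylovSum A B.toCols₁ r + krylovSum A B.toCols₂ q :=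
  Fintype.sum_sum_type _

theorem krylovSum_comp_inr {A : Matrix (ι₁ ⊕ ι₂) (ι₁ ⊕ ι₂) R} (hA : A.toBlocks₂₁ = 0)
    (B : Matrix (ι₁ ⊕ ι₂) κ R) (p : κ → R[X]) :
    krylovSum A B p ∘ Sum.inr = krylovSum A.toBlocks₂₂ B.toRows₂ p := by
  ext i
  simp only [krylovSum, Function.comp_apply, Finset.sum_apply]
  refine Finset.sum_congr rfl fun j _ => congrFun (aeval_mulVec_comp_inr hA (p j) _) i

theorem krylovSum_of_toRows₂_eq_zero {A : Matrix (ι₁ ⊕ ι₂) (ι₁ ⊕ ι₂) R}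
    (hA : A.toBlocks₂₁ = 0) {B : Matrix (ι₁ ⊕ ι₂) κ R} (hB : B.toRows₂ = 0) (p : κ → R[X]) :
    krylovSum A B p = Sum.elim (krylovSum A.toBlocks₁₁ B.toRows₁ p) 0 := by
  have hcol (j : κ) : Bᵀ j = Sum.elim (B.toRows₁ᵀ j) 0 := by
    ext (i | i)
    · rfl
    · exact congrFun (congrFun hB i) j
  ext (i | i) <;>
    simp [krylovSum, Finset.sum_apply, hcol, aeval_mulVec_sumElim_zero hA]

end Krylov

namespace UniformEnsembleReachable

variable {P : Set ℂ} {ι κ : Type*} [Fintype ι] [DecidableEq ι] [Fintype κ]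

theorem of_isEmpty [IsEmpty ι] (A : P → Matrix ι ι ℂ) (B : P → Matrix ι κ ℂ) :
    UniformEnsembleReachable P A B := fun f _ ε hε =>
  ⟨0, fun θ => by rwa [Subsingleton.elim (_ - f θ) 0, norm_zero]⟩

theorem reindex {ι' κ' : Type*} [Fintype ι'] [DecidableEq ι'] [Fintype κ']
    {A : P → Matrix ι ι ℂ} {B : P → Matrix ι κ ℂ} (e : ι ≃ ι') (g : κ ≃ κ')
    (h : UniformEnsembleReachable P A B) :
    UniformEnsembleReachable P (fun θ => reindex e e (A θ)) (fun θ => reindex e g (B θ)) := by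
  rw [uniformEnsembleReachable_iff] at h ⊢
  intro f hf ε hε
  obtain ⟨p, hp⟩ := h (fun θ => f θ ∘ e) (by fun_prop) ε hε
  refine ⟨p ∘ g.symm, fun θ => (pi_norm_lt_iff hε).2 fun i => ?_⟩
  rw [krylovSum_reindex]
  simpa using (pi_norm_lt_iff hε).1 (hp θ) (e.symm i)

theorem of_toBlocks₂₁_eq_zero {ι₁ ι₂ κ₁ κ₂ : Type*} [Fintype ι₁] [Fintype ι₂]
    [DecidableEq ι₁] [DecidableEq ι₂] [Fintype κ₁] [Fintype κ₂]
    {A : P → Matrix (ι₁ ⊕ ι₂) (ι₁ ⊕ ι₂) ℂ} {B : P → Matrix (ι₁ ⊕ ι₂) (κ₁ ⊕ κ₂) ℂ}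
    (hA : Continuous A) (hB : Continuous B) (hA₂₁ : ∀ θ, (A θ).toBlocks₂₁ = 0)
    (hB₂₁ : ∀ θ, (B θ).toBlocks₂₁ = 0)
    (h₁ : UniformEnsembleReachable P (fun θ => (A θ).toBlocks₁₁) (fun θ => (B θ).toBlocks₁₁))
    (h₂ : UniformEnsembleReachable P (fun θ => (A θ).toBlocks₂₂) (fun θ => (B θ).toBlocks₂₂)) :
    UniformEnsembleReachable P A B := by
  rw [uniformEnsembleReachable_iff] at h₁ h₂ ⊢
  intro f hf ε hε
  obtain ⟨q, hq⟩ := h₂ (fun θ => f θ ∘ Sum.inr) (by fun_prop) ε hε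
  set w := fun θ => krylovSum (A θ) (B θ).toCols₂ q
  have hw : Continuous w :=
    hA.krylovSum (continuous_matrix fun i j => hB.matrix_elem i (.inr j)) q
  obtain ⟨r, hr⟩ := h₁ (fun θ => (f θ - w θ) ∘ Sum.inl) (by fun_prop) ε hε
  refine ⟨Sum.elim r q, fun θ => (pi_norm_lt_iff hε).2 ?_⟩
  rw [krylovSum_sumElim, krylovSum_of_toRows₂_eq_zero (B := (B θ).toCols₁) (hA₂₁ θ) (hB₂₁ θ)]
  rintro (i | i)
  · have := (pi_norm_lt_iff hε).1 (hr θ) i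
    rw [Pi.sub_apply, Function.comp_apply, Pi.sub_apply, sub_sub_eq_add_sub] at this
    exact this
  · have := (pi_norm_lt_iff hε).1 (hq θ) i
    rw [show (B θ).toBlocks₂₂ = (B θ).toCols₂.toRows₂ from rfl,
      ← krylovSum_comp_inr (hA₂₁ θ)] at this
    simpa using this

end UniformEnsembleReachable

def sigmaFinSuccEquiv {N : ℕ} (α : Fin (N + 1) → Type*) :
    (Σ i, α i) ≃ α 0 ⊕ Σ i : Fin N, α i.succ where
  toFun x := Fin.cases (motive := fun i => α i → α 0 ⊕ Σ i : Fin N, α i.succ)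
    Sum.inl (fun i a => Sum.inr ⟨i, a⟩) x.1 x.2
  invFun := Sum.elim (fun a => ⟨0, a⟩) (fun x => ⟨x.1.succ, x.2⟩)
  left_inv := by
    rintro ⟨i, a⟩
    cases i using Fin.cases <;> rfl
  right_inv := by
    rintro (a | ⟨i, a⟩) <;> rfl

theorem stmt_1_general {N : ℕ} (P : Set ℂ) (n m : Fin N → ℕ)
    (A : P → Matrix ((i : Fin N) × Fin (n i)) ((i : Fin N) × Fin (n i)) ℂ)
    (B : P → Matrix ((i : Fin N) × Fin (n i)) ((i : Fin N) × Fin (m i)) ℂ)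
    (hA : Continuous A) (hB : Continuous B)
    (hAtri : ∀ (θ : P) (a b : (i : Fin N) × Fin (n i)), b.1 < a.1 → A θ a b = 0)
    (hBtri : ∀ (θ : P) (a : (i : Fin N) × Fin (n i)) (b : (i : Fin N) × Fin (m i)),
      b.1 < a.1 → B θ a b = 0)
    (hdiag : ∀ i : Fin N,
      UniformEnsembleReachable P
        (fun θ => Matrix.of fun a b : Fin (n i) => A θ ⟨i, a⟩ ⟨i, b⟩)
        (fun θ => Matrix.of fun (a : Fin (n i)) (b : Fin (m i)) => B θ ⟨i, a⟩ ⟨i, b⟩)) :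
    UniformEnsembleReachable P A B := by
  induction N with
  | zero => exact .of_isEmpty A B
  | succ N ih =>
    let e := sigmaFinSuccEquiv fun i => Fin (n i)
    let g := sigmaFinSuccEquiv fun i => Fin (m i)
    have hsplit : UniformEnsembleReachable P (fun θ => reindex e e (A θ))
        (fun θ => reindex e g (B θ)) := by
      refine .of_toBlocks₂₁_eq_zero (by fun_prop) (by fun_prop)
        (fun θ => ?_) (fun θ => ?_) (hdiag 0) ?_
      · ext a b
        exact hAtri θ _ _ a.1.succ_pos
      · ext a b
        exact hBtri θ _ _ a.1.succ_pos
      · exact ih _ _ _ _ (continuous_matrix fun _ _ => hA.matrix_elem _ _)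
          (continuous_matrix fun _ _ => hB.matrix_elem _ _)
          (fun θ a b hlt => hAtri θ _ _ (Fin.succ_lt_succ_iff.mpr hlt))
          (fun θ a b hlt => hBtri θ _ _ (Fin.succ_lt_succ_iff.mpr hlt))
          (fun i => hdiag i.succ)
    simpa using hsplit.reindex e.symm g.symm

/-- if all diagonal pairs of an upper block-triangular pair `(A, B)`
(blocks indexed by `Fin N`, block sizes `n i` resp. `m i`) are uniformly ensemble
reachable, then so is `(A, B)`. -/
theorem stmt_1 {N : ℕ} (P : Set ℂ) (hP : IsCompact P) (hPne : P.Nonempty)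
    (n m : Fin N → ℕ) (hn : ∀ i, 0 < n i) (hm : ∀ i, 0 < m i)
    (A : P → Matrix ((i : Fin N) × Fin (n i)) ((i : Fin N) × Fin (n i)) ℂ)
    (B : P → Matrix ((i : Fin N) × Fin (n i)) ((i : Fin N) × Fin (m i)) ℂ)
    (hA : Continuous A) (hB : Continuous B)
    (hAtri : ∀ (θ : P) (a b : (i : Fin N) × Fin (n i)), b.1 < a.1 → A θ a b = 0)
    (hBtri : ∀ (θ : P) (a : (i : Fin N) × Fin (n i)) (b : (i : Fin N) × Fin (m i)),
      b.1 < a.1 → B θ a b = 0)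
    (hdiag : ∀ i : Fin N,
      UniformEnsembleReachable P
        (fun θ => Matrix.of fun a b : Fin (n i) => A θ ⟨i, a⟩ ⟨i, b⟩)
        (fun θ => Matrix.of fun (a : Fin (n i)) (b : Fin (m i)) => B θ ⟨i, a⟩ ⟨i, b⟩)) :
    UniformEnsembleReachable P A B :=
  stmt_1_general P n m A B hA hB hAtri hBtri hdiag
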